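/- Let 0 < m1 ≤ m2 ≤ m3 with m1 + m2 + m3 = 1, assume m3 ≤ m1 + m2, let m3 ≤ α ≤ 1/2, and set A = α³ − (α − m1)³ − (α − m2)³ − (α − m3)³. Let S(α) = {x ∈ [0,1]³ : m1·x1 + m2·x2 + m3·x3 ≤ α} and let c_j = (∫_{S(α)} x_j dλ)/λ(S(α)) denote the coordinates of its centroid. Then for each j ∈ {1,2,3}, c_j = [α⁴ − (α − m_j)³·(α + 3·m_j) − Σ_{i ≠ j} (α − m_i)⁴]/(4·m_j·A). -/

import Mathlib

open MeasureTheory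

private lemma hasDerivAt_maxpow (n : ℕ) (u : ℝ) :
    HasDerivAt (fun u : ℝ => max u 0 ^ (n + 2)) ((n + 2) * max u 0 ^ (n + 1)) u := by
  rcases lt_trichotomy u 0 with h | h | h
  · have he : (fun u : ℝ => max u 0 ^ (n + 2)) =ᶠ[nhds u] fun _ => (0:ℝ) := by
      filter_upwards [Iio_mem_nhds h] with v hv
      rw [max_eq_right (le_of_lt hv)]
      simp
    rw [max_eq_right h.le]
    simpa using (hasDerivAt_const u (0:ℝ)).congr_of_eventuallyEq he
  · subst h
    rw [hasDerivAt_iff_tendsto_slope]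
    have h0 : max (0:ℝ) 0 ^ (n+1) = 0 := by simp
    rw [h0, mul_zero]
    apply squeeze_zero_norm' (a := fun v : ℝ => |v| ^ (n + 1))
    · filter_upwards [self_mem_nhdsWithin] with v (hv : v ≠ 0)
      have h1 : |max v 0| ≤ |v| := by
        rcases le_or_gt v 0 with h | h
        · rw [max_eq_right h]; simp
        · rw [max_eq_left h.le]
      have he : ‖slope (fun u : ℝ => max u 0 ^ (n + 2)) 0 v‖ = |max v 0| ^ (n+2) / |v| := by
        rw [slope_def_field]; simp [div_eq_mul_inv, abs_mul, abs_pow]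
      rw [he, div_le_iff₀ (abs_pos.mpr hv)]
      calc |max v 0| ^ (n+2) ≤ |v| ^ (n+2) := pow_le_pow_left₀ (abs_nonneg _) h1 _
        _ = |v| ^ (n+1) * |v| := by ring
    · have ht : Filter.Tendsto (fun v : ℝ => |v| ^ (n + 1)) (nhds 0) (nhds 0) := by
        exact (show Continuous (fun v : ℝ => |v| ^ (n + 1)) by fun_prop).tendsto' 0 0 (by simp)
      exact ht.mono_left nhdsWithin_le_nhds
  · have he : (fun u : ℝ => max u 0 ^ (n + 2)) =ᶠ[nhds u] fun v => v ^ (n + 2) := by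
      filter_upwards [Ioi_mem_nhds h] with v hv
      rw [max_eq_left (le_of_lt hv)]
    have := (hasDerivAt_pow (n+2) u).congr_of_eventuallyEq he
    refine this.congr_deriv ?_
    rw [max_eq_left h.le]
    push_cast; ring

private lemma dgen (n : ℕ) (a b : ℝ) (f : ℝ → ℝ) (hf : ∀ t, f t = a - b * t) (x : ℝ) :
    HasDerivAt (fun t => max (f t) 0 ^ (n + 2)) (-((n + 2) * b * max (f x) 0 ^ (n + 1))) x := by
  have h1 : HasDerivAt f (-b) x := by
    have : HasDerivAt (fun t : ℝ => a - b * t) (-b) x := by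
      simpa using ((hasDerivAt_id x).const_mul b).const_sub a
    exact this.congr_of_eventuallyEq (by filter_upwards with t; rw [hf t])
  have := (hasDerivAt_maxpow n (f x)).comp x h1
  refine this.congr_deriv ?_
  ring

private lemma d2' (a b : ℝ) (f : ℝ → ℝ) (hf : ∀ t, f t = a - b * t) (x : ℝ) :
    HasDerivAt (fun t => max (f t) 0 ^ 2) (-(2 * b * max (f x) 0)) x := by
  have := dgen 0 a b f hf x
  norm_num at this ⊢
  convert this using 1

private lemma d3' (a b : ℝ) (f : ℝ → ℝ) (hf : ∀ t, f t = a - b * t) (x : ℝ) :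
    HasDerivAt (fun t => max (f t) 0 ^ 3) (-(3 * b * max (f x) 0 ^ 2)) x := by
  have := dgen 1 a b f hf x
  norm_num at this ⊢
  convert this using 1

private lemma d4' (a b : ℝ) (f : ℝ → ℝ) (hf : ∀ t, f t = a - b * t) (x : ℝ) :
    HasDerivAt (fun t => max (f t) 0 ^ 4) (-(4 * b * max (f x) 0 ^ 3)) x := by
  have := dgen 2 a b f hf x
  norm_num at this ⊢
  convert this using 1

private lemma cube_id (u : ℝ) : max u 0 ^ 3 = u * max u 0 ^ 2 := by
  rcases le_or_gt u 0 with h | h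
  · rw [max_eq_right h]; ring
  · rw [max_eq_left h.le]; ring

private lemma middle (m2 m3 β : ℝ) (hm2 : m2 ≠ 0) (h3 : m3 ≠ 0) :
    ∫ y in (0:ℝ)..1, (max (β - m2 * y) 0 - max (β - m2 * y - m3) 0) / m3 =
      (max β 0 ^ 2 - max (β - m2) 0 ^ 2 - max (β - m3) 0 ^ 2 + max (β - m2 - m3) 0 ^ 2) /
        (2 * (m2 * m3)) := by
  have hd : ∀ y ∈ Set.uIcc (0:ℝ) 1, HasDerivAt
      (fun y => -(max (β - m2 * y) 0 ^ 2 - max (β - m2 * y - m3) 0 ^ 2) / (2 * (m2 * m3)))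
      ((max (β - m2 * y) 0 - max (β - m2 * y - m3) 0) / m3) y := by
    intro y _
    have h1 := d2' β m2 (fun y => β - m2 * y) (fun t => rfl) y
    have h2 := d2' (β - m3) m2 (fun y => β - m2 * y - m3) (fun t => by ring) y
    have := ((h1.sub h2).neg).div_const (2 * (m2 * m3))
    refine this.congr_deriv ?_
    field_simp
    ring
  have hi : IntervalIntegrable
      (fun y => (max (β - m2 * y) 0 - max (β - m2 * y - m3) 0) / m3) volume 0 1 := by
    apply Continuous.intervalIntegrable
    fun_prop
  have := intervalIntegral.integral_eq_sub_of_hasDerivAt hd hi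
  rw [this]
  ring

private lemma outer_vol (m1 m2 m3 α : ℝ) (hm1 : 0 < m1) (hm2 : 0 < m2) (hm3 : 0 < m3)
    (h0a : 0 ≤ α) (h1a : 0 ≤ α - m1) (h2a : 0 ≤ α - m2) (h3a : 0 ≤ α - m3)
    (h12 : α - m1 - m2 ≤ 0) (h13 : α - m1 - m3 ≤ 0) (h23 : α - m2 - m3 ≤ 0) :
    ∫ x in (0:ℝ)..1,
      (max (α - m1 * x) 0 ^ 2 - max (α - m1 * x - m2) 0 ^ 2 - max (α - m1 * x - m3) 0 ^ 2 +
        max (α - m1 * x - m2 - m3) 0 ^ 2) / (2 * (m2 * m3)) =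
      (α ^ 3 - (α - m1) ^ 3 - (α - m2) ^ 3 - (α - m3) ^ 3) / (6 * (m1 * (m2 * m3))) := by
  set F : ℝ → ℝ := fun x =>
    (-(max (α - m1 * x) 0 ^ 3) + max (α - m1 * x - m2) 0 ^ 3 + max (α - m1 * x - m3) 0 ^ 3 -
      max (α - m1 * x - m2 - m3) 0 ^ 3) / (3 * m1 * (2 * (m2 * m3))) with hF
  have hd : ∀ x ∈ Set.uIcc (0:ℝ) 1, HasDerivAt F
      ((max (α - m1 * x) 0 ^ 2 - max (α - m1 * x - m2) 0 ^ 2 - max (α - m1 * x - m3) 0 ^ 2 +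
        max (α - m1 * x - m2 - m3) 0 ^ 2) / (2 * (m2 * m3))) x := by
    intro x _
    have h0 := d3' α m1 (fun x => α - m1 * x) (fun t => rfl) x
    have h2 := d3' (α - m2) m1 (fun x => α - m1 * x - m2) (fun t => by ring) x
    have h3 := d3' (α - m3) m1 (fun x => α - m1 * x - m3) (fun t => by ring) x
    have h23' := d3' (α - m2 - m3) m1 (fun x => α - m1 * x - m2 - m3) (fun t => by ring) x
    have := (((h0.neg.add h2).add h3).sub h23').div_const (3 * m1 * (2 * (m2 * m3)))
    refine this.congr_deriv ?_
    field_simp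
    ring
  have hi : IntervalIntegrable (fun x =>
      (max (α - m1 * x) 0 ^ 2 - max (α - m1 * x - m2) 0 ^ 2 - max (α - m1 * x - m3) 0 ^ 2 +
        max (α - m1 * x - m2 - m3) 0 ^ 2) / (2 * (m2 * m3))) volume 0 1 := by
    apply Continuous.intervalIntegrable; fun_prop
  rw [intervalIntegral.integral_eq_sub_of_hasDerivAt hd hi, hF]
  beta_reduce
  have e1 : max (α - m1 * 1) 0 = α - m1 * 1 := max_eq_left (by linarith)
  have e2 : max (α - m1 * 1 - m2) 0 = 0 := max_eq_right (by linarith)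
  have e3 : max (α - m1 * 1 - m3) 0 = 0 := max_eq_right (by linarith)
  have e4 : max (α - m1 * 1 - m2 - m3) 0 = 0 := max_eq_right (by linarith)
  have e5 : max (α - m1 * 0) 0 = α - m1 * 0 := max_eq_left (by linarith)
  have e6 : max (α - m1 * 0 - m2) 0 = α - m1 * 0 - m2 := max_eq_left (by linarith)
  have e7 : max (α - m1 * 0 - m3) 0 = α - m1 * 0 - m3 := max_eq_left (by linarith)
  have e8 : max (α - m1 * 0 - m2 - m3) 0 = 0 := max_eq_right (by linarith)
  rw [e1, e2, e3, e4, e5, e6, e7, e8]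
  field_simp
  ring

private lemma outer_x (m1 m2 m3 α : ℝ) (hm1 : 0 < m1) (hm2 : 0 < m2) (hm3 : 0 < m3)
    (h0a : 0 ≤ α) (h1a : 0 ≤ α - m1) (h2a : 0 ≤ α - m2) (h3a : 0 ≤ α - m3)
    (h12 : α - m1 - m2 ≤ 0) (h13 : α - m1 - m3 ≤ 0) (h23 : α - m2 - m3 ≤ 0) :
    ∫ x in (0:ℝ)..1, x *
      ((max (α - m1 * x) 0 ^ 2 - max (α - m1 * x - m2) 0 ^ 2 - max (α - m1 * x - m3) 0 ^ 2 +
        max (α - m1 * x - m2 - m3) 0 ^ 2) / (2 * (m2 * m3))) =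
      (α ^ 4 - (α - m1) ^ 3 * (α + 3 * m1) - (α - m2) ^ 4 - (α - m3) ^ 4) /
        (24 * (m1 ^ 2 * (m2 * m3))) := by
  set F : ℝ → ℝ := fun x =>
    ((-(α * max (α - m1 * x) 0 ^ 3) / 3 + max (α - m1 * x) 0 ^ 4 / 4) -
     (-((α - m2) * max (α - m1 * x - m2) 0 ^ 3) / 3 + max (α - m1 * x - m2) 0 ^ 4 / 4) -
     (-((α - m3) * max (α - m1 * x - m3) 0 ^ 3) / 3 + max (α - m1 * x - m3) 0 ^ 4 / 4) +
     (-((α - m2 - m3) * max (α - m1 * x - m2 - m3) 0 ^ 3) / 3 +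
        max (α - m1 * x - m2 - m3) 0 ^ 4 / 4)) / (m1 ^ 2 * (2 * (m2 * m3))) with hF
  have hd : ∀ x ∈ Set.uIcc (0:ℝ) 1, HasDerivAt F
      (x * ((max (α - m1 * x) 0 ^ 2 - max (α - m1 * x - m2) 0 ^ 2 -
        max (α - m1 * x - m3) 0 ^ 2 + max (α - m1 * x - m2 - m3) 0 ^ 2) /
          (2 * (m2 * m3)))) x := by
    intro x _
    have h0a' := d3' α m1 (fun x => α - m1 * x) (fun t => rfl) x
    have h0b := d4' α m1 (fun x => α - m1 * x) (fun t => rfl) x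
    have h2a' := d3' (α - m2) m1 (fun x => α - m1 * x - m2) (fun t => by ring) x
    have h2b := d4' (α - m2) m1 (fun x => α - m1 * x - m2) (fun t => by ring) x
    have h3a' := d3' (α - m3) m1 (fun x => α - m1 * x - m3) (fun t => by ring) x
    have h3b := d4' (α - m3) m1 (fun x => α - m1 * x - m3) (fun t => by ring) x
    have h4a := d3' (α - m2 - m3) m1 (fun x => α - m1 * x - m2 - m3) (fun t => by ring) x
    have h4b := d4' (α - m2 - m3) m1 (fun x => α - m1 * x - m2 - m3) (fun t => by ring) x
    have t0 := ((h0a'.const_mul α).neg.div_const 3).add (h0b.div_const 4)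
    have t2 := ((h2a'.const_mul (α - m2)).neg.div_const 3).add (h2b.div_const 4)
    have t3 := ((h3a'.const_mul (α - m3)).neg.div_const 3).add (h3b.div_const 4)
    have t4 := ((h4a.const_mul (α - m2 - m3)).neg.div_const 3).add (h4b.div_const 4)
    have := (((t0.sub t2).sub t3).add t4).div_const (m1 ^ 2 * (2 * (m2 * m3)))
    refine this.congr_deriv ?_
    rw [cube_id (α - m1 * x), cube_id (α - m1 * x - m2), cube_id (α - m1 * x - m3),
      cube_id (α - m1 * x - m2 - m3)]
    field_simp
    ring
  have hi : IntervalIntegrable (fun x => x *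
      ((max (α - m1 * x) 0 ^ 2 - max (α - m1 * x - m2) 0 ^ 2 - max (α - m1 * x - m3) 0 ^ 2 +
        max (α - m1 * x - m2 - m3) 0 ^ 2) / (2 * (m2 * m3)))) volume 0 1 := by
    apply Continuous.intervalIntegrable; fun_prop
  rw [intervalIntegral.integral_eq_sub_of_hasDerivAt hd hi, hF]
  beta_reduce
  have e1 : max (α - m1 * 1) 0 = α - m1 * 1 := max_eq_left (by linarith)
  have e2 : max (α - m1 * 1 - m2) 0 = 0 := max_eq_right (by linarith)
  have e3 : max (α - m1 * 1 - m3) 0 = 0 := max_eq_right (by linarith)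
  have e4 : max (α - m1 * 1 - m2 - m3) 0 = 0 := max_eq_right (by linarith)
  have e5 : max (α - m1 * 0) 0 = α - m1 * 0 := max_eq_left (by linarith)
  have e6 : max (α - m1 * 0 - m2) 0 = α - m1 * 0 - m2 := max_eq_left (by linarith)
  have e7 : max (α - m1 * 0 - m3) 0 = α - m1 * 0 - m3 := max_eq_left (by linarith)
  have e8 : max (α - m1 * 0 - m2 - m3) 0 = 0 := max_eq_right (by linarith)
  rw [e1, e2, e3, e4, e5, e6, e7, e8]
  field_simp
  ring

private lemma clamp_eq (m t : ℝ) (hm : 0 < m) :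
    max (min 1 (t / m)) 0 = (max t 0 - max (t - m) 0) / m := by
  rcases le_or_gt t 0 with h | h
  · have ht : t / m ≤ 0 := div_nonpos_iff.mpr (Or.inr ⟨h, hm.le⟩)
    rw [max_eq_right h, max_eq_right (by linarith : t - m ≤ 0),
      max_eq_right (le_trans (min_le_right _ _) ht)]
    simp
  · rcases le_or_gt t m with h2 | h2
    · have h1' : t / m ≤ 1 := by rw [div_le_one hm]; linarith
      have h0' : 0 ≤ t / m := by positivity
      rw [min_eq_right h1', max_eq_left h0', max_eq_left h.le,
        max_eq_right (by linarith : t - m ≤ 0)]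
      ring
    · have h1' : (1:ℝ) ≤ t / m := by rw [le_div_iff₀ hm]; linarith
      rw [min_eq_left h1', max_eq_left zero_le_one, max_eq_left h.le,
        max_eq_left (by linarith : 0 ≤ t - m)]
      field_simp
      ring

private lemma innerZ (m3 t c : ℝ) (hm3 : 0 < m3) :
    ∫ z : ℝ, Set.indicator {z : ℝ | z ∈ Set.Icc (0:ℝ) 1 ∧ m3 * z ≤ t} (fun _ => c) z =
      c * ((max t 0 - max (t - m3) 0) / m3) := by
  have hset : {z : ℝ | z ∈ Set.Icc (0:ℝ) 1 ∧ m3 * z ≤ t} = Set.Icc 0 (min 1 (t / m3)) := by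
    ext z
    simp only [Set.mem_setOf_eq, Set.mem_Icc, le_min_iff]
    constructor
    · rintro ⟨⟨h0, h1⟩, h2⟩
      exact ⟨h0, h1, by rw [le_div_iff₀ hm3]; linarith [mul_comm m3 z]⟩
    · rintro ⟨h0, h1, h2⟩
      refine ⟨⟨h0, h1⟩, ?_⟩
      rw [le_div_iff₀ hm3] at h2
      linarith [mul_comm m3 z]
  rw [hset, integral_indicator measurableSet_Icc, setIntegral_const, Real.volume_real_Icc,
    smul_eq_mul, ← clamp_eq m3 t hm3]
  rw [sub_zero]
  ring

private lemma twoD (m2 m3 β c : ℝ) (hm2 : 0 < m2) (hm3 : 0 < m3) :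
    ∫ q : ℝ × ℝ, Set.indicator
      {q : ℝ × ℝ | q.1 ∈ Set.Icc (0:ℝ) 1 ∧ q.2 ∈ Set.Icc (0:ℝ) 1 ∧ m2 * q.1 + m3 * q.2 ≤ β}
      (fun _ => c) q =
      c * ((max β 0 ^ 2 - max (β - m2) 0 ^ 2 - max (β - m3) 0 ^ 2 +
        max (β - m2 - m3) 0 ^ 2) / (2 * (m2 * m3))) := by
  set T : Set (ℝ × ℝ) :=
    {q : ℝ × ℝ | q.1 ∈ Set.Icc (0:ℝ) 1 ∧ q.2 ∈ Set.Icc (0:ℝ) 1 ∧ m2 * q.1 + m3 * q.2 ≤ β}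
    with hTdef
  have hT : MeasurableSet T := by
    have : T = (Prod.fst ⁻¹' Set.Icc (0:ℝ) 1) ∩ ((Prod.snd ⁻¹' Set.Icc (0:ℝ) 1) ∩
        {q : ℝ × ℝ | m2 * q.1 + m3 * q.2 ≤ β}) := rfl
    rw [this]
    exact (measurable_fst measurableSet_Icc).inter ((measurable_snd measurableSet_Icc).inter
      (measurableSet_le (by fun_prop) measurable_const))
  have hTsub : T ⊆ Set.Icc (0:ℝ) 1 ×ˢ Set.Icc (0:ℝ) 1 := fun q hq => ⟨hq.1, hq.2.1⟩
  have hsq : volume (Set.Icc (0:ℝ) 1 ×ˢ Set.Icc (0:ℝ) 1) = 1 := by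
    rw [Measure.volume_eq_prod, Measure.prod_prod, Real.volume_Icc]
    simp
  have hTfin : volume T < ⊤ :=
    lt_of_le_of_lt (measure_mono hTsub) (by rw [hsq]; exact ENNReal.one_lt_top)
  have hint : Integrable (T.indicator (fun _ => c)) (volume : Measure (ℝ × ℝ)) := by
    rw [integrable_indicator_iff hT]
    exact (integrableOn_const_iff (C := c)).mpr (Or.inr hTfin)
  rw [Measure.volume_eq_prod] at hint ⊢
  rw [integral_prod _ hint]
  have hpt : ∀ y : ℝ, (∫ z, T.indicator (fun _ => c) (y, z)) =
      Set.indicator (Set.Icc (0:ℝ) 1)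
        (fun y => c * ((max (β - m2 * y) 0 - max (β - m2 * y - m3) 0) / m3)) y := by
    intro y
    by_cases hy : y ∈ Set.Icc (0:ℝ) 1
    · rw [Set.indicator_of_mem hy]
      have heq : (fun z => T.indicator (fun _ => c) (y, z)) =
          fun z => Set.indicator {z : ℝ | z ∈ Set.Icc (0:ℝ) 1 ∧ m3 * z ≤ β - m2 * y}
            (fun _ => c) z := by
        funext z
        by_cases hz : z ∈ {z : ℝ | z ∈ Set.Icc (0:ℝ) 1 ∧ m3 * z ≤ β - m2 * y}
        · rw [Set.indicator_of_mem hz, Set.indicator_of_mem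
            (show (y, z) ∈ T from ⟨hy, hz.1, by linarith [hz.2]⟩)]
        · rw [Set.indicator_of_notMem hz, Set.indicator_of_notMem
            (show (y, z) ∉ T from fun hmem => hz ⟨hmem.2.1, by linarith [hmem.2.2]⟩)]
      rw [heq, innerZ m3 (β - m2 * y) c hm3]
    · rw [Set.indicator_of_notMem hy]
      have heq : (fun z => T.indicator (fun _ => c) (y, z)) = fun _ => (0:ℝ) :=
        funext fun z => Set.indicator_of_notMem (fun h => hy h.1) _
      rw [heq, integral_zero]
  rw [integral_congr_ae (Filter.Eventually.of_forall hpt)]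
  rw [integral_indicator measurableSet_Icc, integral_Icc_eq_integral_Ioc,
    ← intervalIntegral.integral_of_le zero_le_one, intervalIntegral.integral_const_mul,
    middle m2 m3 β hm2.ne' hm3.ne']

private lemma measU (m1 m2 m3 α : ℝ) :
    MeasurableSet {p : ℝ × ℝ × ℝ | p.1 ∈ Set.Icc (0:ℝ) 1 ∧ p.2.1 ∈ Set.Icc (0:ℝ) 1 ∧
      p.2.2 ∈ Set.Icc (0:ℝ) 1 ∧ m1 * p.1 + m2 * p.2.1 + m3 * p.2.2 ≤ α} := by
  have : {p : ℝ × ℝ × ℝ | p.1 ∈ Set.Icc (0:ℝ) 1 ∧ p.2.1 ∈ Set.Icc (0:ℝ) 1 ∧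
      p.2.2 ∈ Set.Icc (0:ℝ) 1 ∧ m1 * p.1 + m2 * p.2.1 + m3 * p.2.2 ≤ α} =
      (Prod.fst ⁻¹' Set.Icc (0:ℝ) 1) ∩ (((fun p : ℝ × ℝ × ℝ => p.2.1) ⁻¹' Set.Icc (0:ℝ) 1) ∩
        (((fun p : ℝ × ℝ × ℝ => p.2.2) ⁻¹' Set.Icc (0:ℝ) 1) ∩
          {p : ℝ × ℝ × ℝ | m1 * p.1 + m2 * p.2.1 + m3 * p.2.2 ≤ α})) := rfl
  rw [this]
  exact (measurable_fst measurableSet_Icc).inter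
    (((measurable_fst.comp measurable_snd) measurableSet_Icc).inter
      (((measurable_snd.comp measurable_snd) measurableSet_Icc).inter
        (measurableSet_le (by fun_prop) measurable_const)))

private lemma glue (m1 m2 m3 α : ℝ) (f : ℝ × ℝ × ℝ → ℝ) (g : ℝ → ℝ)
    (hm2 : 0 < m2) (hm3 : 0 < m3)
    (hf : ∀ p : ℝ × ℝ × ℝ, f p = g p.1)
    (hfm : Continuous g) (hb : ∀ x ∈ Set.Icc (0:ℝ) 1, |g x| ≤ 1) :
    (∫ p in {p : ℝ × ℝ × ℝ | p.1 ∈ Set.Icc (0:ℝ) 1 ∧ p.2.1 ∈ Set.Icc (0:ℝ) 1 ∧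
      p.2.2 ∈ Set.Icc (0:ℝ) 1 ∧ m1 * p.1 + m2 * p.2.1 + m3 * p.2.2 ≤ α}, f p) =
      ∫ x in (0:ℝ)..1, g x *
        ((max (α - m1 * x) 0 ^ 2 - max (α - m1 * x - m2) 0 ^ 2 - max (α - m1 * x - m3) 0 ^ 2 +
          max (α - m1 * x - m2 - m3) 0 ^ 2) / (2 * (m2 * m3))) := by
  set U : Set (ℝ × ℝ × ℝ) := {p : ℝ × ℝ × ℝ | p.1 ∈ Set.Icc (0:ℝ) 1 ∧ p.2.1 ∈ Set.Icc (0:ℝ) 1 ∧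
      p.2.2 ∈ Set.Icc (0:ℝ) 1 ∧ m1 * p.1 + m2 * p.2.1 + m3 * p.2.2 ≤ α} with hUdef
  have hU : MeasurableSet U := measU m1 m2 m3 α
  have hUsub : U ⊆ Set.Icc (0:ℝ) 1 ×ˢ (Set.Icc (0:ℝ) 1 ×ˢ Set.Icc (0:ℝ) 1) :=
    fun p hp => ⟨hp.1, hp.2.1, hp.2.2.1⟩
  have hcube : volume (Set.Icc (0:ℝ) 1 ×ˢ (Set.Icc (0:ℝ) 1 ×ˢ Set.Icc (0:ℝ) 1)) = 1 := by
    rw [Measure.volume_eq_prod, Measure.prod_prod, Measure.volume_eq_prod, Measure.prod_prod,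
      Real.volume_Icc]
    simp
  have hUfin : volume U ≠ ⊤ := by
    refine ne_top_of_le_ne_top ?_ (measure_mono hUsub)
    rw [hcube]; exact ENNReal.one_ne_top
  have hio : IntegrableOn f U volume := by
    apply Measure.integrableOn_of_bounded (M := 1) hUfin
    · have hfe : f = fun p : ℝ × ℝ × ℝ => g p.1 := funext hf
      rw [hfe]
      exact (hfm.comp (continuous_fst : Continuous (Prod.fst : ℝ × ℝ × ℝ → ℝ))).aestronglyMeasurable
    · refine (ae_restrict_iff' hU).mpr (Filter.Eventually.of_forall fun p hp => ?_)
      rw [hf]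
      exact hb p.1 hp.1
  have hint : Integrable (U.indicator f) volume := (integrable_indicator_iff hU).mpr hio
  rw [← integral_indicator hU]
  rw [Measure.volume_eq_prod] at hint ⊢
  rw [integral_prod _ hint]
  have hpt : ∀ x : ℝ, (∫ q : ℝ × ℝ, U.indicator f (x, q)) =
      Set.indicator (Set.Icc (0:ℝ) 1) (fun x => g x *
        ((max (α - m1 * x) 0 ^ 2 - max (α - m1 * x - m2) 0 ^ 2 - max (α - m1 * x - m3) 0 ^ 2 +
          max (α - m1 * x - m2 - m3) 0 ^ 2) / (2 * (m2 * m3)))) x := by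
    intro x
    by_cases hx : x ∈ Set.Icc (0:ℝ) 1
    · rw [Set.indicator_of_mem hx]
      have heq : (fun q : ℝ × ℝ => U.indicator f (x, q)) =
          fun q : ℝ × ℝ => Set.indicator
            {q : ℝ × ℝ | q.1 ∈ Set.Icc (0:ℝ) 1 ∧ q.2 ∈ Set.Icc (0:ℝ) 1 ∧
              m2 * q.1 + m3 * q.2 ≤ α - m1 * x} (fun _ => g x) q := by
        funext q
        by_cases hq : q ∈ {q : ℝ × ℝ | q.1 ∈ Set.Icc (0:ℝ) 1 ∧ q.2 ∈ Set.Icc (0:ℝ) 1 ∧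
            m2 * q.1 + m3 * q.2 ≤ α - m1 * x}
        · rw [Set.indicator_of_mem hq, Set.indicator_of_mem
            (show (x, q) ∈ U from ⟨hx, hq.1, hq.2.1, by linarith [hq.2.2]⟩), hf]
        · rw [Set.indicator_of_notMem hq, Set.indicator_of_notMem
            (show (x, q) ∉ U from fun hmem => hq ⟨hmem.2.1, hmem.2.2.1, by
              linarith [hmem.2.2.2]⟩)]
      rw [heq, twoD m2 m3 (α - m1 * x) (g x) hm2 hm3]
    · rw [Set.indicator_of_notMem hx]
      have heq : (fun q : ℝ × ℝ => U.indicator f (x, q)) = fun _ => (0:ℝ) :=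
        funext fun q => Set.indicator_of_notMem (fun h => hx h.1) _
      rw [heq, integral_zero]
  rw [integral_congr_ae (Filter.Eventually.of_forall hpt)]
  rw [integral_indicator measurableSet_Icc, integral_Icc_eq_integral_Ioc,
    ← intervalIntegral.integral_of_le zero_le_one]

private lemma keyX (m1 m2 m3 α : ℝ) (hm1 : 0 < m1) (hm2 : 0 < m2) (hm3 : 0 < m3)
    (h1a : m1 ≤ α) (h2a : m2 ≤ α) (h3a : m3 ≤ α)
    (h12 : α ≤ m1 + m2) (h13 : α ≤ m1 + m3) (h23 : α ≤ m2 + m3) :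
    (∫ p in {p : ℝ × ℝ × ℝ | p.1 ∈ Set.Icc (0:ℝ) 1 ∧ p.2.1 ∈ Set.Icc (0:ℝ) 1 ∧
      p.2.2 ∈ Set.Icc (0:ℝ) 1 ∧ m1 * p.1 + m2 * p.2.1 + m3 * p.2.2 ≤ α}, p.1) =
      (α ^ 4 - (α - m1) ^ 3 * (α + 3 * m1) - (α - m2) ^ 4 - (α - m3) ^ 4) /
        (24 * (m1 ^ 2 * (m2 * m3))) := by
  rw [glue m1 m2 m3 α (fun p => p.1) (fun x => x) hm2 hm3 (fun p => rfl) continuous_id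
    (fun x hx => abs_le.mpr ⟨by linarith [hx.1], hx.2⟩)]
  beta_reduce
  exact outer_x m1 m2 m3 α hm1 hm2 hm3 (by linarith) (by linarith) (by linarith) (by linarith)
    (by linarith) (by linarith) (by linarith)

private lemma keyV (m1 m2 m3 α : ℝ) (hm1 : 0 < m1) (hm2 : 0 < m2) (hm3 : 0 < m3)
    (h1a : m1 ≤ α) (h2a : m2 ≤ α) (h3a : m3 ≤ α)
    (h12 : α ≤ m1 + m2) (h13 : α ≤ m1 + m3) (h23 : α ≤ m2 + m3) :
    (volume {p : ℝ × ℝ × ℝ | p.1 ∈ Set.Icc (0:ℝ) 1 ∧ p.2.1 ∈ Set.Icc (0:ℝ) 1 ∧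
      p.2.2 ∈ Set.Icc (0:ℝ) 1 ∧ m1 * p.1 + m2 * p.2.1 + m3 * p.2.2 ≤ α}).toReal =
      (α ^ 3 - (α - m1) ^ 3 - (α - m2) ^ 3 - (α - m3) ^ 3) / (6 * (m1 * (m2 * m3))) := by
  have h1 : (∫ _ in {p : ℝ × ℝ × ℝ | p.1 ∈ Set.Icc (0:ℝ) 1 ∧ p.2.1 ∈ Set.Icc (0:ℝ) 1 ∧
      p.2.2 ∈ Set.Icc (0:ℝ) 1 ∧ m1 * p.1 + m2 * p.2.1 + m3 * p.2.2 ≤ α}, (1:ℝ)) =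
      (α ^ 3 - (α - m1) ^ 3 - (α - m2) ^ 3 - (α - m3) ^ 3) / (6 * (m1 * (m2 * m3))) := by
    rw [glue m1 m2 m3 α (fun _ => (1:ℝ)) (fun _ => (1:ℝ)) hm2 hm3 (fun p => rfl)
      continuous_const (fun x _ => by norm_num)]
    simp only [one_mul]
    exact outer_vol m1 m2 m3 α hm1 hm2 hm3 (by linarith) (by linarith) (by linarith)
      (by linarith) (by linarith) (by linarith) (by linarith)
  rw [setIntegral_const, smul_eq_mul, mul_one] at h1
  exact h1

private def e12 : (ℝ × ℝ × ℝ) ≃ᵐ (ℝ × ℝ × ℝ) :=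
  (MeasurableEquiv.prodAssoc.symm.trans
    (((MeasurableEquiv.prodComm (α := ℝ) (β := ℝ)).prodCongr (MeasurableEquiv.refl ℝ)).trans
      MeasurableEquiv.prodAssoc))

private lemma e12_apply (p : ℝ × ℝ × ℝ) : e12 p = (p.2.1, p.1, p.2.2) := rfl

private lemma e12_mp : MeasurePreserving e12 volume volume := by
  have h1 : MeasurePreserving (MeasurableEquiv.prodAssoc.symm :
      ℝ × ℝ × ℝ ≃ᵐ (ℝ × ℝ) × ℝ) volume volume := by
    rw [Measure.volume_eq_prod, Measure.volume_eq_prod (ℝ × ℝ) ℝ, Measure.volume_eq_prod]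
    exact (measurePreserving_prodAssoc volume volume volume).symm _
  have h2 : MeasurePreserving
      (((MeasurableEquiv.prodComm (α := ℝ) (β := ℝ)).prodCongr (MeasurableEquiv.refl ℝ)) :
        (ℝ × ℝ) × ℝ ≃ᵐ (ℝ × ℝ) × ℝ) volume volume := by
    rw [Measure.volume_eq_prod (ℝ × ℝ) ℝ, Measure.volume_eq_prod]
    exact (Measure.measurePreserving_swap.prod (MeasurePreserving.id volume))
  have h3 : MeasurePreserving (MeasurableEquiv.prodAssoc :
      (ℝ × ℝ) × ℝ ≃ᵐ ℝ × ℝ × ℝ) volume volume := by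
    rw [Measure.volume_eq_prod (ℝ × ℝ) ℝ, Measure.volume_eq_prod, Measure.volume_eq_prod]
    exact measurePreserving_prodAssoc volume volume volume
  exact (h3.comp h2).comp h1

private def e13 : (ℝ × ℝ × ℝ) ≃ᵐ (ℝ × ℝ × ℝ) :=
  ((MeasurableEquiv.refl ℝ).prodCongr (MeasurableEquiv.prodComm (α := ℝ) (β := ℝ))).trans
    (e12.trans ((MeasurableEquiv.refl ℝ).prodCongr (MeasurableEquiv.prodComm (α := ℝ) (β := ℝ))))

private lemma e13_apply (p : ℝ × ℝ × ℝ) : e13 p = (p.2.2, p.2.1, p.1) := rfl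

private lemma e13_mp : MeasurePreserving e13 volume volume := by
  have hs : MeasurePreserving
      (((MeasurableEquiv.refl ℝ).prodCongr (MeasurableEquiv.prodComm (α := ℝ) (β := ℝ))) :
        ℝ × ℝ × ℝ ≃ᵐ ℝ × ℝ × ℝ) volume volume := by
    rw [Measure.volume_eq_prod ℝ (ℝ × ℝ), Measure.volume_eq_prod]
    exact ((MeasurePreserving.id volume).prod Measure.measurePreserving_swap)
  exact (hs.comp e12_mp).comp hs

private lemma div4 (a b c d : ℝ) : a / b / (c / d) = a * d / (b * c) := by
  simp only [div_eq_mul_inv, mul_inv, inv_inv]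
  ring

/-- Configuration 4 (hexagon cut interface): centroid of the cut region of the
unit cube when `m3 ≤ m1 + m2` and `m3 ≤ α ≤ 1/2`. -/
theorem cut_centroid_config4 (m1 m2 m3 α : ℝ)
    (hm1 : 0 < m1) (hm12 : m1 ≤ m2) (hm23 : m2 ≤ m3)
    (hsum : m1 + m2 + m3 = 1) (hcfg : m3 ≤ m1 + m2)
    (hα0 : m3 ≤ α) (hα1 : α ≤ 1 / 2)
    (A : ℝ) (hA : A = α ^ 3 - (α - m1) ^ 3 - (α - m2) ^ 3 - (α - m3) ^ 3)
    (S : Set (ℝ × ℝ × ℝ))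
    (hS : S = {p : ℝ × ℝ × ℝ | p.1 ∈ Set.Icc 0 1 ∧ p.2.1 ∈ Set.Icc 0 1 ∧
        p.2.2 ∈ Set.Icc 0 1 ∧ m1 * p.1 + m2 * p.2.1 + m3 * p.2.2 ≤ α}) :
    (∫ p in S, p.1) / (volume S).toReal =
      (α ^ 4 - (α - m1) ^ 3 * (α + 3 * m1) - (α - m2) ^ 4 - (α - m3) ^ 4) /
        (4 * m1 * A) ∧
    (∫ p in S, p.2.1) / (volume S).toReal =
      (α ^ 4 - (α - m1) ^ 4 - (α - m2) ^ 3 * (α + 3 * m2) - (α - m3) ^ 4) /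
        (4 * m2 * A) ∧
    (∫ p in S, p.2.2) / (volume S).toReal =
      (α ^ 4 - (α - m1) ^ 4 - (α - m2) ^ 4 - (α - m3) ^ 3 * (α + 3 * m3)) /
        (4 * m3 * A) := by
  have hm2 : 0 < m2 := lt_of_lt_of_le hm1 hm12
  have hm3 : 0 < m3 := lt_of_lt_of_le hm2 hm23
  have h1a : m1 ≤ α := by linarith
  have h2a : m2 ≤ α := by linarith
  have h3a : m3 ≤ α := hα0
  have h12 : α ≤ m1 + m2 := by linarith
  have h13 : α ≤ m1 + m3 := by linarith
  have h23 : α ≤ m2 + m3 := by linarith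
  have hVol : (volume S).toReal =
      A / (6 * (m1 * (m2 * m3))) := by
    rw [hS, hA]
    exact keyV m1 m2 m3 α hm1 hm2 hm3 h1a h2a h3a h12 h13 h23
  have hI1 : (∫ p in S, p.1) =
      (α ^ 4 - (α - m1) ^ 3 * (α + 3 * m1) - (α - m2) ^ 4 - (α - m3) ^ 4) /
        (24 * (m1 ^ 2 * (m2 * m3))) := by
    rw [hS]
    exact keyX m1 m2 m3 α hm1 hm2 hm3 h1a h2a h3a h12 h13 h23
  have hI2 : (∫ p in S, p.2.1) =
      (α ^ 4 - (α - m2) ^ 3 * (α + 3 * m2) - (α - m1) ^ 4 - (α - m3) ^ 4) /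
        (24 * (m2 ^ 2 * (m1 * m3))) := by
    rw [hS, ← integral_indicator (measU m1 m2 m3 α)]
    have htr := e12_mp.integral_comp e12.measurableEmbedding
      (Set.indicator {p : ℝ × ℝ × ℝ | p.1 ∈ Set.Icc (0:ℝ) 1 ∧ p.2.1 ∈ Set.Icc (0:ℝ) 1 ∧
        p.2.2 ∈ Set.Icc (0:ℝ) 1 ∧ m1 * p.1 + m2 * p.2.1 + m3 * p.2.2 ≤ α}
        (fun p => p.2.1))
    rw [← htr]
    have heq : (fun p : ℝ × ℝ × ℝ =>
        Set.indicator {p : ℝ × ℝ × ℝ | p.1 ∈ Set.Icc (0:ℝ) 1 ∧ p.2.1 ∈ Set.Icc (0:ℝ) 1 ∧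
          p.2.2 ∈ Set.Icc (0:ℝ) 1 ∧ m1 * p.1 + m2 * p.2.1 + m3 * p.2.2 ≤ α}
          (fun p => p.2.1) (e12 p)) =
        Set.indicator {p : ℝ × ℝ × ℝ | p.1 ∈ Set.Icc (0:ℝ) 1 ∧ p.2.1 ∈ Set.Icc (0:ℝ) 1 ∧
          p.2.2 ∈ Set.Icc (0:ℝ) 1 ∧ m2 * p.1 + m1 * p.2.1 + m3 * p.2.2 ≤ α}
          (fun p => p.1) := by
      funext p
      rw [e12_apply]
      by_cases hp : p ∈ {p : ℝ × ℝ × ℝ | p.1 ∈ Set.Icc (0:ℝ) 1 ∧ p.2.1 ∈ Set.Icc (0:ℝ) 1 ∧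
          p.2.2 ∈ Set.Icc (0:ℝ) 1 ∧ m2 * p.1 + m1 * p.2.1 + m3 * p.2.2 ≤ α}
      · rw [Set.indicator_of_mem hp, Set.indicator_of_mem
          (show ((p.2.1, p.1, p.2.2) : ℝ × ℝ × ℝ) ∈ {p : ℝ × ℝ × ℝ | p.1 ∈ Set.Icc (0:ℝ) 1 ∧ p.2.1 ∈ Set.Icc (0:ℝ) 1 ∧
            p.2.2 ∈ Set.Icc (0:ℝ) 1 ∧ m1 * p.1 + m2 * p.2.1 + m3 * p.2.2 ≤ α} from
            ⟨hp.2.1, hp.1, hp.2.2.1, by linarith [hp.2.2.2]⟩)]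
      · rw [Set.indicator_of_notMem hp, Set.indicator_of_notMem
          (show ((p.2.1, p.1, p.2.2) : ℝ × ℝ × ℝ) ∉ {p : ℝ × ℝ × ℝ | p.1 ∈ Set.Icc (0:ℝ) 1 ∧ p.2.1 ∈ Set.Icc (0:ℝ) 1 ∧
            p.2.2 ∈ Set.Icc (0:ℝ) 1 ∧ m1 * p.1 + m2 * p.2.1 + m3 * p.2.2 ≤ α} from
            fun hmem => hp ⟨hmem.2.1, hmem.1, hmem.2.2.1, by linarith [hmem.2.2.2]⟩)]
    rw [heq, integral_indicator (measU m2 m1 m3 α)]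
    exact keyX m2 m1 m3 α hm2 hm1 hm3 h2a h1a h3a (by linarith) (by linarith) (by linarith)
  have hI3 : (∫ p in S, p.2.2) =
      (α ^ 4 - (α - m3) ^ 3 * (α + 3 * m3) - (α - m2) ^ 4 - (α - m1) ^ 4) /
        (24 * (m3 ^ 2 * (m2 * m1))) := by
    rw [hS, ← integral_indicator (measU m1 m2 m3 α)]
    have htr := e13_mp.integral_comp e13.measurableEmbedding
      (Set.indicator {p : ℝ × ℝ × ℝ | p.1 ∈ Set.Icc (0:ℝ) 1 ∧ p.2.1 ∈ Set.Icc (0:ℝ) 1 ∧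
        p.2.2 ∈ Set.Icc (0:ℝ) 1 ∧ m1 * p.1 + m2 * p.2.1 + m3 * p.2.2 ≤ α}
        (fun p => p.2.2))
    rw [← htr]
    have heq : (fun p : ℝ × ℝ × ℝ =>
        Set.indicator {p : ℝ × ℝ × ℝ | p.1 ∈ Set.Icc (0:ℝ) 1 ∧ p.2.1 ∈ Set.Icc (0:ℝ) 1 ∧
          p.2.2 ∈ Set.Icc (0:ℝ) 1 ∧ m1 * p.1 + m2 * p.2.1 + m3 * p.2.2 ≤ α}
          (fun p => p.2.2) (e13 p)) =
        Set.indicator {p : ℝ × ℝ × ℝ | p.1 ∈ Set.Icc (0:ℝ) 1 ∧ p.2.1 ∈ Set.Icc (0:ℝ) 1 ∧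
          p.2.2 ∈ Set.Icc (0:ℝ) 1 ∧ m3 * p.1 + m2 * p.2.1 + m1 * p.2.2 ≤ α}
          (fun p => p.1) := by
      funext p
      rw [e13_apply]
      by_cases hp : p ∈ {p : ℝ × ℝ × ℝ | p.1 ∈ Set.Icc (0:ℝ) 1 ∧ p.2.1 ∈ Set.Icc (0:ℝ) 1 ∧
          p.2.2 ∈ Set.Icc (0:ℝ) 1 ∧ m3 * p.1 + m2 * p.2.1 + m1 * p.2.2 ≤ α}
      · rw [Set.indicator_of_mem hp, Set.indicator_of_mem
          (show ((p.2.2, p.2.1, p.1) : ℝ × ℝ × ℝ) ∈ {p : ℝ × ℝ × ℝ | p.1 ∈ Set.Icc (0:ℝ) 1 ∧ p.2.1 ∈ Set.Icc (0:ℝ) 1 ∧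
            p.2.2 ∈ Set.Icc (0:ℝ) 1 ∧ m1 * p.1 + m2 * p.2.1 + m3 * p.2.2 ≤ α} from
            ⟨hp.2.2.1, hp.2.1, hp.1, by linarith [hp.2.2.2]⟩)]
      · rw [Set.indicator_of_notMem hp, Set.indicator_of_notMem
          (show ((p.2.2, p.2.1, p.1) : ℝ × ℝ × ℝ) ∉ {p : ℝ × ℝ × ℝ | p.1 ∈ Set.Icc (0:ℝ) 1 ∧ p.2.1 ∈ Set.Icc (0:ℝ) 1 ∧
            p.2.2 ∈ Set.Icc (0:ℝ) 1 ∧ m1 * p.1 + m2 * p.2.1 + m3 * p.2.2 ≤ α} from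
            fun hmem => hp ⟨hmem.2.2.1, hmem.2.1, hmem.1, by linarith [hmem.2.2.2]⟩)]
    rw [heq, integral_indicator (measU m3 m2 m1 α)]
    exact keyX m3 m2 m1 α hm3 hm2 hm1 h3a h2a h1a (by linarith) (by linarith) (by linarith)
  rcases eq_or_ne A 0 with hA0 | hA0
  · rw [hVol, hA0]
    norm_num
  · have d1 : (24 * (m1 ^ 2 * (m2 * m3)) : ℝ) ≠ 0 := by positivity
    have d2 : (24 * (m2 ^ 2 * (m1 * m3)) : ℝ) ≠ 0 := by positivity
    have d3 : (24 * (m3 ^ 2 * (m2 * m1)) : ℝ) ≠ 0 := by positivity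
    refine ⟨?_, ?_, ?_⟩
    · rw [hI1, hVol, div4,
        div_eq_div_iff (mul_ne_zero d1 hA0) (mul_ne_zero (by positivity) hA0)]
      ring
    · rw [hI2, hVol, div4,
        div_eq_div_iff (mul_ne_zero d2 hA0) (mul_ne_zero (by positivity) hA0)]
      ring
    · rw [hI3, hVol, div4,
        div_eq_div_iff (mul_ne_zero d3 hA0) (mul_ne_zero (by positivity) hA0)]
      ring
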